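/- Let σ ≥ 1, let μ : (0,∞) → ℝ be a normal majorant of the class (σ,1) with μ(η) → 0 as η → 0⁺, let γ = {t ∈ ℂ : |t+1| = 1}, and let g : γ → ℝ be defined by g(t) = 8·∫₀¹ μ(η)·[((Re t)² − (Im t)²)(η⁴ + |t|⁴) − 2η²|t|⁴]/|η² − t²|⁴ · η dη. Then there exists a continuous function F : {z ∈ ℂ : |z+1| ≤ 1} → ℝ such that F(z) = Re g̃(z) for all z with |z+1| < 1, where g̃(z) = (1/(2πi))·∮_γ g(t)/(t − z) dt is the Cauchy-type integral of g. -/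

import Mathlib

/-!
For `|z + 1| < 1` and `t ∈ γ`, `(t + 1) / (t - z) = (1 + H(t)) / 2` with `H` the Herglotz–Riesz
kernel, whose real part is the Poisson kernel `P`. Hence `Re g̃` is half the sum of the mean of `g`
and the Poisson integral of `g`, and the Poisson integral of a function continuous on `γ` extends
continuously to the closed disc by its boundary values, `P` being a positive kernel of mass one
that concentrates at the boundary point. So everything reduces to the continuity of `g` on `γ`.

Away from `t = 0`, `η² - t²` does not vanish for `η ∈ [0, 1]` and `g` is continuous by dominated
convergence. Near `t = 0` the numerator of the integrand is `Re (t̄² (η² - t²)²)`, so the kernel is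
at most `|t|² / |η² - t²|² ≤ 4 |t|² / (η² + |t|²)²` on `γ`; together with
`μ(η) ≤ σ (1 + η / |t|) μ(|t|)` this gives `|g(t)| ≤ 24 π σ μ(|t|)`, which tends to `0`.
-/

open Set MeasureTheory intervalIntegral Real

/-- The special density `g(t) = 8·∫₀¹ μ(η)·[((Re t)² − (Im t)²)(η⁴ + |t|⁴) − 2η²|t|⁴]/|η² − t²|⁴ · η dη`. -/
noncomputable def gFun (μ : ℝ → ℝ) (t : ℂ) : ℝ :=
  8 * ∫ η in (0 : ℝ)..1, μ η *
      (((t.re ^ 2 - t.im ^ 2) * (η ^ 4 + ‖t‖ ^ 4)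
          - 2 * η ^ 2 * ‖t‖ ^ 4) /
        ‖(η : ℂ) ^ 2 - t ^ 2‖ ^ 4) * η

/-- The Cauchy-type integral `g̃(z) = (1/(2πi))·∮_γ g(t)/(t − z) dt` along the circle of
center `−1` and radius `1`. -/
noncomputable def cauchyTypeIntegral (g : ℂ → ℝ) (z : ℂ) : ℂ :=
  (2 * Real.pi * Complex.I)⁻¹ * ∮ t in C(-1, 1), (g t : ℂ) / (t - z)

open Metric Filter Topology
open scoped Interval

theorem continuousAt_intervalIntegral_mul_of_continuousOn {X : Type*} [TopologicalSpace X]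
    [FirstCountableTopology X] {φ : ℝ → ℝ} {F : X → ℝ → ℝ} {a b : ℝ} {K : Set X} {x₀ : X}
    (hK : IsCompact K) (hKx₀ : K ∈ 𝓝 x₀) (hφ : IntervalIntegrable φ volume a b)
    (hF : ContinuousOn (Function.uncurry F) (K ×ˢ [[a, b]])) :
    ContinuousAt (fun x => ∫ η in a..b, φ η * F x η) x₀ := by
  obtain ⟨C, hC⟩ := (hK.prod isCompact_uIcc).exists_bound_of_continuousOn hF
  refine continuousAt_of_dominated_interval (bound := fun η => ‖φ η‖ * C) ?_ ?_
    (hφ.norm.mul_const C) ?_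
  · filter_upwards [hKx₀] with x hx
    have hFx : ContinuousOn (F x) [[a, b]] :=
      hF.comp (Continuous.prodMk_right x).continuousOn fun η hη => ⟨hx, hη⟩
    exact (intervalIntegrable_iff.1 hφ).aestronglyMeasurable.mul
      ((hFx.mono uIoc_subset_uIcc).aestronglyMeasurable measurableSet_uIoc)
  · filter_upwards [hKx₀] with x hx
    refine ae_of_all _ fun η hη => ?_
    rw [norm_mul]
    exact mul_le_mul_of_nonneg_left (hC (x, η) ⟨hx, uIoc_subset_uIcc hη⟩) (norm_nonneg _)
  · refine ae_of_all _ fun η hη => continuousAt_const.mul ?_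
    have h := hF (x₀, η) ⟨mem_of_mem_nhds hKx₀, uIoc_subset_uIcc hη⟩
    have hmaps : MapsTo (fun x => (x, η)) K (K ×ˢ [[a, b]]) :=
      fun x hx => ⟨hx, uIoc_subset_uIcc hη⟩
    exact (h.comp (x := x₀) (Continuous.prodMk_left η).continuousWithinAt hmaps).continuousAt hKx₀

lemma integral_inv_sq_add_sq_le {s : ℝ} (hs : 0 < s) :
    ∫ η in (0 : ℝ)..1, (η ^ 2 + s ^ 2)⁻¹ ≤ π / (2 * s) := by
  have h : ∀ η : ℝ, (η ^ 2 + s ^ 2)⁻¹ = (s ^ 2)⁻¹ * (1 + (η / s) ^ 2)⁻¹ := fun η => by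
    field_simp; ring
  simp_rw [h]
  rw [intervalIntegral.integral_const_mul,
    intervalIntegral.integral_comp_div (fun x => (1 + x ^ 2)⁻¹) hs.ne', integral_inv_one_add_sq,
    zero_div, arctan_zero, sub_zero, smul_eq_mul]
  have := arctan_lt_pi_div_two (1 / s)
  calc (s ^ 2)⁻¹ * (s * arctan (1 / s)) = arctan (1 / s) / s := by field_simp
    _ ≤ π / 2 / s := by gcongr
    _ = π / (2 * s) := by ring

section Poisson

variable {f : ℂ → ℝ} {c w w₀ z : ℂ} {R : ℝ}

lemma poissonKernel_nonneg (hz : z ∈ sphere c R) (hw : w ∈ ball c R) :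
    0 ≤ poissonKernel c w z := by
  rw [mem_sphere_iff_norm] at hz
  rw [mem_ball_iff_norm] at hw
  rw [poissonKernel_def, hz]
  have := norm_nonneg (w - c)
  exact div_nonneg (by nlinarith) (sq_nonneg _)

lemma poissonKernel_mul_norm_sub_sq (hz : z ∈ sphere c R) (hw : w ∈ ball c R) :
    poissonKernel c w z * ‖z - w‖ ^ 2 = R ^ 2 - ‖w - c‖ ^ 2 := by
  have hzw : z - w ≠ 0 := sub_ne_zero.2 (sphere_disjoint_ball.ne_of_mem hz hw)
  rw [mem_sphere_iff_norm] at hz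
  rw [poissonKernel_def, sub_sub_sub_cancel_right, hz]
  field_simp

lemma continuousOn_poissonKernel (hw : w ∈ ball c R) :
    ContinuousOn (poissonKernel c w) (sphere c |R|) := by
  rw [poissonKernel_eq_re_herglotzRieszKernel]
  exact Complex.continuous_re.comp_continuousOn (continuousOn_herglotzRieszKernel_sphere hw)

lemma circleAverage_poissonKernel (hw : w ∈ ball c R) :
    circleAverage (poissonKernel c w) c R = 1 := by
  have h := (diffContOnCl_const (c := (1 : ℂ))).circleAverage_poissonKernel_smul hw
  have hint := (continuousOn_poissonKernel hw).circleIntegrable'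
  rw [← Complex.ofReal_inj, Complex.ofReal_one, ← h, ← Complex.ofRealCLM_apply,
    ← Complex.ofRealCLM.circleAverage_comp_comm hint]
  congr 1
  ext z
  simp

lemma continuousOn_circleAverage_poissonKernel_smul (hf : CircleIntegrable f c R) :
    ContinuousOn (fun w => circleAverage (poissonKernel c w • f) c R) (ball c R) := by
  have hf₀ : CircleIntegrable (fun ζ => f (ζ + c)) 0 R := by
    simpa [CircleIntegrable, circleMap, add_comm] using hf
  have hf₀' : CircleIntegrable (fun ζ => (f (ζ + c) : ℂ)) 0 R := by
    simp only [CircleIntegrable, intervalIntegrable_iff] at hf₀ ⊢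
    exact Complex.ofRealCLM.integrable_comp hf₀
  have hH := (differentiableOn_circleAverage_herglotzRieszKernel_smul hf₀').continuousOn
  refine (Complex.continuous_re.comp_continuousOn (hH.comp (continuous_sub_right c).continuousOn
    fun w hw => ?_)).congr fun w hw => ?_
  · rw [mem_ball_iff_norm] at hw ⊢; simpa using hw
  · have hw₀ : w - c ∈ ball 0 R := by rw [mem_ball_iff_norm] at hw ⊢; simpa using hw
    simp only [Function.comp_apply]
    rw [re_circleAverage_herglotzRieszKernel_smul hf₀ hw₀, ← circleAverage_map_add_const,
      ← poissonKernel_eq_re_herglotzRieszKernel]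
    congr 1
    ext ζ
    simp [poissonKernel_def]

lemma poissonKernel_mul_abs_sub_le {ε δ B : ℝ} (hz : z ∈ sphere c R) (hw : w ∈ ball c R)
    (hδ : 0 < δ) (hε : 0 ≤ ε) (hfar : |f z - f w₀| ≤ 2 * B)
    (hnear : ‖z - w₀‖ < δ → |f z - f w₀| ≤ ε) :
    poissonKernel c w z * |f z - f w₀|
      ≤ (ε + 4 * B / δ ^ 2 * ‖w - w₀‖ ^ 2) * poissonKernel c w z
        + 4 * B / δ ^ 2 * (R ^ 2 - ‖w - c‖ ^ 2) := by
  have hP := poissonKernel_nonneg hz hw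
  have hPz := poissonKernel_mul_norm_sub_sq hz hw
  have hB : 0 ≤ B := by linarith [abs_nonneg (f z - f w₀)]
  have hC : 0 ≤ 4 * B / δ ^ 2 := by positivity
  rcases lt_or_ge ‖z - w₀‖ δ with hzw₀ | hzw₀
  · have h1 : 0 ≤ 4 * B / δ ^ 2 * (‖w - w₀‖ ^ 2 * poissonKernel c w z) := by positivity
    have h2 : 0 ≤ 4 * B / δ ^ 2 * (R ^ 2 - ‖w - c‖ ^ 2) := by
      rw [← hPz]; positivity
    nlinarith [mul_le_mul_of_nonneg_left (hnear hzw₀) hP]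
  · -- away from `w₀`, `|f z - f w₀| ≤ 2B ≤ 2B ‖z - w₀‖² / δ²`, and `P ‖z - w‖² = R² - ‖w - c‖²`
    have hsq : ‖z - w₀‖ ^ 2 ≤ 2 * ‖z - w‖ ^ 2 + 2 * ‖w - w₀‖ ^ 2 := by
      nlinarith [norm_sub_le_norm_sub_add_norm_sub z w w₀, norm_nonneg (z - w₀),
        sq_nonneg (‖z - w‖ - ‖w - w₀‖)]
    have hfar' : |f z - f w₀| ≤ 2 * B / δ ^ 2 * ‖z - w₀‖ ^ 2 := by
      refine hfar.trans ?_
      rw [div_mul_eq_mul_div, le_div_iff₀ (by positivity)]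
      exact mul_le_mul_of_nonneg_left (pow_le_pow_left₀ hδ.le hzw₀ 2) (by positivity)
    calc poissonKernel c w z * |f z - f w₀|
        ≤ poissonKernel c w z * (2 * B / δ ^ 2 * (2 * ‖z - w‖ ^ 2 + 2 * ‖w - w₀‖ ^ 2)) := by
          gcongr
          exact hfar'.trans (mul_le_mul_of_nonneg_left hsq (by positivity))
      _ = 4 * B / δ ^ 2 * ‖w - w₀‖ ^ 2 * poissonKernel c w z
          + 4 * B / δ ^ 2 * (poissonKernel c w z * ‖z - w‖ ^ 2) := by ring
      _ ≤ _ := by rw [hPz]; nlinarith [mul_nonneg hε hP]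

lemma circleAverage_poissonKernel_smul_sub (hf : CircleIntegrable f c R) (hw : w ∈ ball c R)
    (a : ℝ) : circleAverage (poissonKernel c w • f) c R - a
      = circleAverage (fun z => poissonKernel c w z * (f z - a)) c R := by
  have hP : CircleIntegrable (poissonKernel c w) c R :=
    (continuousOn_poissonKernel hw).circleIntegrable'
  have hPf : CircleIntegrable (poissonKernel c w • f) c R :=
    hf.continuousOn_mul (continuousOn_poissonKernel hw)
  have hfa : (fun z => poissonKernel c w z * (f z - a))
      = poissonKernel c w • f - a • poissonKernel c w := by
    ext z; simp only [Pi.sub_apply, Pi.smul_apply, Pi.mul_apply, smul_eq_mul]; ring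
  rw [hfa, circleAverage_sub hPf hP.const_smul, circleAverage_smul,
    circleAverage_poissonKernel hw, smul_eq_mul a 1, mul_one]

theorem abs_circleAverage_poissonKernel_smul_sub_le {ε δ B : ℝ}
    (hf : ContinuousOn f (sphere c R)) (hB : ∀ z ∈ sphere c R, |f z| ≤ B) (hδ : 0 < δ)
    (hε : 0 ≤ ε) (hnear : ∀ z ∈ sphere c R, ‖z - w₀‖ < δ → |f z - f w₀| ≤ ε)
    (hw₀ : w₀ ∈ sphere c R) (hw : w ∈ ball c R) :
    |circleAverage (poissonKernel c w • f) c R - f w₀|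
      ≤ ε + 4 * B / δ ^ 2 * (‖w - w₀‖ ^ 2 + (R ^ 2 - ‖w - c‖ ^ 2)) := by
  have hR : 0 < R := pos_of_mem_ball hw
  have hsphere : sphere c |R| = sphere c R := by rw [abs_of_pos hR]
  have hP : CircleIntegrable (poissonKernel c w) c R :=
    (continuousOn_poissonKernel hw).circleIntegrable'
  have hPf : CircleIntegrable (fun z => poissonKernel c w z * (f z - f w₀)) c R :=
    ((hf.sub continuousOn_const).circleIntegrable hR.le).continuousOn_mul
      (continuousOn_poissonKernel hw)
  set a := ε + 4 * B / δ ^ 2 * ‖w - w₀‖ ^ 2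
  set b := 4 * B / δ ^ 2 * (R ^ 2 - ‖w - c‖ ^ 2)
  have hbound : ∀ z ∈ sphere c |R|, |poissonKernel c w z * (f z - f w₀)|
      ≤ a * poissonKernel c w z + b := by
    intro z hz
    rw [hsphere] at hz
    rw [abs_mul, abs_of_nonneg (poissonKernel_nonneg hz hw)]
    refine poissonKernel_mul_abs_sub_le hz hw hδ hε ?_ (hnear z hz)
    linarith [abs_sub (f z) (f w₀), hB z hz, hB w₀ hw₀]
  calc |circleAverage (poissonKernel c w • f) c R - f w₀|
      ≤ circleAverage (fun z => |poissonKernel c w z * (f z - f w₀)|) c R := by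
        rw [circleAverage_poissonKernel_smul_sub (hf.circleIntegrable hR.le) hw]
        exact abs_circleAverage_le_circleAverage_abs
    _ ≤ circleAverage (a • poissonKernel c w + fun _ => b) c R :=
        circleAverage_mono hPf.abs (hP.const_smul.add (circleIntegrable_const b c R)) hbound
    _ = ε + 4 * B / δ ^ 2 * (‖w - w₀‖ ^ 2 + (R ^ 2 - ‖w - c‖ ^ 2)) := by
        rw [circleAverage_add hP.const_smul (circleIntegrable_const b c R), circleAverage_smul,
          circleAverage_poissonKernel hw, circleAverage_const]
        simp only [a, b, smul_eq_mul]
        ring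

open Classical in
noncomputable def poissonExtension (f : ℂ → ℝ) (c : ℂ) (R : ℝ) (w : ℂ) : ℝ :=
  if w ∈ ball c R then circleAverage (poissonKernel c w • f) c R else f w

theorem continuousOn_poissonExtension (hf : ContinuousOn f (sphere c R)) :
    ContinuousOn (poissonExtension f c R) (closedBall c R) := by
  intro w₀ hw₀
  rw [← ball_union_sphere] at hw₀
  rcases hw₀ with hw₀ | hw₀
  · have hR : 0 < R := pos_of_mem_ball hw₀
    have hcont := (continuousOn_circleAverage_poissonKernel_smul
      (hf.circleIntegrable hR.le)).continuousAt (isOpen_ball.mem_nhds hw₀)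
    refine (hcont.congr ?_).continuousWithinAt
    filter_upwards [isOpen_ball.mem_nhds hw₀] with w hw
    rw [poissonExtension, if_pos hw]
  rw [ContinuousWithinAt, poissonExtension, if_neg (sphere_disjoint_ball.notMem_of_mem_left hw₀),
    Metric.tendsto_nhds]
  intro ε hε
  obtain ⟨B, hB⟩ := (isCompact_sphere c R).exists_bound_of_continuousOn hf
  obtain ⟨δ, hδ, hfδ⟩ := Metric.continuousWithinAt_iff.1 (hf w₀ hw₀) (ε / 2) (half_pos hε)
  have hnear : ∀ z ∈ sphere c R, ‖z - w₀‖ < δ → |f z - f w₀| ≤ ε / 2 := fun z hz hzw₀ =>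
    (hfδ hz (by rwa [dist_eq_norm])).le
  have hsmall : ∀ᶠ w in 𝓝 w₀,
      ε / 2 + 4 * B / δ ^ 2 * (‖w - w₀‖ ^ 2 + (R ^ 2 - ‖w - c‖ ^ 2)) < ε := by
    refine ContinuousAt.eventually_lt (by fun_prop) continuousAt_const ?_
    rw [mem_sphere_iff_norm.1 hw₀]
    simpa using half_lt_self hε
  filter_upwards [self_mem_nhdsWithin, nhdsWithin_le_nhds hsmall,
    nhdsWithin_le_nhds (ball_mem_nhds w₀ hδ)] with w hw hwε hwδ
  rw [← ball_union_sphere] at hw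
  rcases hw with hw | hw
  · rw [poissonExtension, if_pos hw, Real.dist_eq]
    exact (abs_circleAverage_poissonKernel_smul_sub_le hf (fun z hz => by simpa using hB z hz) hδ
      (half_pos hε).le hnear hw₀ hw).trans_lt hwε
  · rw [poissonExtension, if_neg (sphere_disjoint_ball.notMem_of_mem_left hw)]
    exact (hfδ hw hwδ).trans (half_lt_self hε)

end Poisson

section Cauchy

variable {c t w : ℂ} {R : ℝ}

lemma circleIntegral_div_sub_eq_circleAverage {g : ℂ → ℂ} (hR : 0 < R) (z : ℂ) :
    (2 * π * Complex.I)⁻¹ * ∮ t in C(c, R), g t / (t - z)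
      = circleAverage (fun t => (t - c) / (t - z) * g t) c R := by
  rw [circleAverage_eq_circleIntegral hR.ne', smul_eq_mul]
  congr 1
  refine circleIntegral.integral_congr hR.le fun t ht => ?_
  have htc : t - c ≠ 0 := sub_ne_zero.2 (ne_of_mem_sphere ht hR.ne')
  simp only [smul_eq_mul]
  field_simp

lemma re_div_sub_eq (ht : t ∈ sphere c R) (hw : w ∈ ball c R) :
    ((t - c) / (t - w)).re = (1 + poissonKernel c w t) / 2 := by
  have htw : t - w ≠ 0 := sub_ne_zero.2 (sphere_disjoint_ball.ne_of_mem ht hw)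
  have h : (t - c) / (t - w) = (1 + herglotzRieszKernel c w t) / 2 := by
    rw [herglotzRieszKernel_def, sub_sub_sub_cancel_right]
    field_simp
    ring
  rw [h, poissonKernel_eq_re_herglotzRieszKernel]
  simp [Complex.div_ofNat_re]

theorem re_cauchyTypeIntegral {g : ℂ → ℝ} (hg : CircleIntegrable g (-1) 1) {z : ℂ}
    (hz : z ∈ ball (-1 : ℂ) 1) :
    (cauchyTypeIntegral g z).re
      = (circleAverage g (-1) 1 + circleAverage (poissonKernel (-1) z • g) (-1) 1) / 2 := by
  have hgℂ : CircleIntegrable (fun t => (g t : ℂ)) (-1) 1 := by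
    simp only [CircleIntegrable, intervalIntegrable_iff] at hg ⊢
    exact Complex.ofRealCLM.integrable_comp hg
  have hk : ContinuousOn (fun t : ℂ => (t - -1) / (t - z)) (sphere (-1) |1|) := by
    rw [abs_one]
    exact (continuousOn_id.sub continuousOn_const).div (continuousOn_id.sub continuousOn_const)
      fun t ht => sub_ne_zero.2 (sphere_disjoint_ball.ne_of_mem ht hz)
  have hPg : CircleIntegrable (poissonKernel (-1) z • g) (-1) 1 :=
    hg.continuousOn_mul (continuousOn_poissonKernel hz)
  have hkg : CircleIntegrable (fun t => (t - -1) / (t - z) * (g t : ℂ)) (-1) 1 :=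
    hgℂ.continuousOn_mul hk
  rw [cauchyTypeIntegral, circleIntegral_div_sub_eq_circleAverage one_pos, ← Complex.reCLM_apply,
    ← ContinuousLinearMap.circleAverage_comp_comm _ hkg]
  rw [circleAverage_congr_sphere (f₂ := (1 / 2 : ℝ) • (g + poissonKernel (-1) z • g)),
    circleAverage_smul, circleAverage_add hg hPg]
  · simp only [smul_eq_mul]; ring
  · intro t ht
    rw [abs_one] at ht
    simp only [Function.comp_apply, Complex.reCLM_apply, Complex.re_mul_ofReal,
      re_div_sub_eq ht hz, Pi.smul_apply, Pi.add_apply, Pi.mul_apply, smul_eq_mul]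
    ring

end Cauchy

section NormalMajorant

variable {μ : ℝ → ℝ}

lemma nonneg_of_monotoneOn_of_tendsto_zero (hμ_mono : ∀ x y : ℝ, 0 < x → x ≤ y → μ x ≤ μ y)
    (hμ0 : Tendsto μ (𝓝[>] 0) (𝓝 0)) {x : ℝ} (hx : 0 < x) : 0 ≤ μ x := by
  refine le_of_tendsto hμ0 ?_
  filter_upwards [Ioo_mem_nhdsGT hx] with y hy
  exact hμ_mono y x hy.1 hy.2.le

lemma intervalIntegrable_of_monotoneOn_of_nonneg
    (hμ_mono : ∀ x y : ℝ, 0 < x → x ≤ y → μ x ≤ μ y) (hμ_nonneg : ∀ x, 0 < x → 0 ≤ μ x)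
    {b : ℝ} (hb : 0 ≤ b) : IntervalIntegrable μ volume 0 b := by
  rw [intervalIntegrable_iff_integrableOn_Ioc_of_le hb]
  refine IntegrableOn.of_bound measure_Ioc_lt_top (aemeasurable_restrict_of_monotoneOn
    measurableSet_Ioc fun x hx y _ hxy => hμ_mono x y hx.1 hxy).aestronglyMeasurable (μ b) ?_
  filter_upwards [ae_restrict_mem measurableSet_Ioc] with x hx
  rw [Real.norm_eq_abs, abs_of_nonneg (hμ_nonneg x hx.1)]
  exact hμ_mono x b hx.1 hx.2

lemma le_mul_of_normalMajorant {σ : ℝ} (hσ : 1 ≤ σ)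
    (hμ_mono : ∀ x y : ℝ, 0 < x → x ≤ y → μ x ≤ μ y)
    (hμ_nm : ∀ lam η : ℝ, 1 < lam → 0 < η → μ (lam * η) ≤ σ * lam * μ η)
    (hμ_nonneg : ∀ x, 0 < x → 0 ≤ μ x) {η s : ℝ} (hη : 0 < η) (hs : 0 < s) :
    μ η ≤ σ * (1 + η / s) * μ s := by
  have hμs := hμ_nonneg s hs
  have hηs : 0 ≤ η / s := by positivity
  rcases le_or_gt η s with h | h
  · have h1 : 1 ≤ σ * (1 + η / s) := by nlinarith
    nlinarith [hμ_mono η s hη h]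
  · have hlam : 1 < η / s := (one_lt_div hs).2 h
    have h1 := hμ_nm _ s hlam hs
    rw [div_mul_cancel₀ _ hs.ne'] at h1
    nlinarith

end NormalMajorant

section gFun

variable {μ : ℝ → ℝ} {t : ℂ}

noncomputable def gFunKernel (t : ℂ) (η : ℝ) : ℝ :=
  ((t.re ^ 2 - t.im ^ 2) * (η ^ 4 + ‖t‖ ^ 4) - 2 * η ^ 2 * ‖t‖ ^ 4) / ‖(η : ℂ) ^ 2 - t ^ 2‖ ^ 4

lemma gFun_eq_integral_gFunKernel (μ : ℝ → ℝ) (t : ℂ) :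
    gFun μ t = 8 * ∫ η in (0 : ℝ)..1, μ η * (gFunKernel t η * η) := by
  simp only [gFun, gFunKernel, mul_assoc]

lemma gFunKernel_numerator_eq (t : ℂ) (η : ℝ) :
    (t.re ^ 2 - t.im ^ 2) * (η ^ 4 + ‖t‖ ^ 4) - 2 * η ^ 2 * ‖t‖ ^ 4
      = ((starRingEnd ℂ t) ^ 2 * ((η : ℂ) ^ 2 - t ^ 2) ^ 2).re := by
  have h4 : ‖t‖ ^ 4 = (t.re ^ 2 + t.im ^ 2) ^ 2 := by
    rw [show (4 : ℕ) = 2 * 2 from rfl, pow_mul, Complex.sq_norm, Complex.normSq_apply]; ring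
  rw [h4]
  simp only [pow_two, Complex.mul_re, Complex.mul_im, Complex.sub_re, Complex.sub_im,
    Complex.conj_re, Complex.conj_im, Complex.ofReal_re, Complex.ofReal_im]
  ring

lemma abs_gFunKernel_le (t : ℂ) (η : ℝ) :
    |gFunKernel t η| ≤ ‖t‖ ^ 2 / ‖(η : ℂ) ^ 2 - t ^ 2‖ ^ 2 := by
  rw [gFunKernel, gFunKernel_numerator_eq, abs_div, abs_pow, abs_norm]
  set A := ‖(η : ℂ) ^ 2 - t ^ 2‖
  calc |((starRingEnd ℂ t) ^ 2 * ((η : ℂ) ^ 2 - t ^ 2) ^ 2).re| / A ^ 4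
      ≤ ‖t‖ ^ 2 * A ^ 2 / A ^ 4 := by
        gcongr
        exact (Complex.abs_re_le_norm _).trans_eq (by simp [A])
    _ = ‖t‖ ^ 2 / A ^ 2 := by
        rcases eq_or_ne A 0 with hA | hA
        · simp [hA]
        · field_simp

lemma re_eq_of_mem_sphere (ht : t ∈ sphere (-1 : ℂ) 1) : t.re = -‖t‖ ^ 2 / 2 := by
  rw [mem_sphere_iff_norm, sub_neg_eq_add] at ht
  have h := Complex.normSq_add t 1
  rw [Complex.normSq_eq_norm_sq, Complex.normSq_eq_norm_sq, ht] at h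
  simp only [one_pow, map_one, mul_one] at h
  linarith

lemma sq_sub_sq_ne_zero (ht : t ∈ sphere (-1 : ℂ) 1) (ht0 : t ≠ 0) {η : ℝ}
    (hη : η ∈ Icc (0 : ℝ) 1) : (η : ℂ) ^ 2 - t ^ 2 ≠ 0 := by
  intro h
  have hre := re_eq_of_mem_sphere ht
  have hη0 : 0 < η := lt_of_le_of_ne hη.1 fun h0 => ht0 (by simpa [← h0] using h)
  rcases sq_eq_sq_iff_eq_or_eq_neg.1 (sub_eq_zero.1 h) with h | h
  · rw [← h, Complex.ofReal_re, Complex.norm_real, Real.norm_of_nonneg hη.1] at hre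
    nlinarith
  · rw [neg_eq_iff_eq_neg.1 h.symm, Complex.neg_re, Complex.ofReal_re, norm_neg,
      Complex.norm_real, Real.norm_of_nonneg hη.1] at hre
    nlinarith [hη.2]

lemma half_sq_add_sq_le_norm_sq_sub_sq (ht : t ∈ sphere (-1 : ℂ) 1) (hts : ‖t‖ ≤ 1) (η : ℝ) :
    (η ^ 2 + ‖t‖ ^ 2) / 2 ≤ ‖(η : ℂ) ^ 2 - t ^ 2‖ := by
  have hre := re_eq_of_mem_sphere ht
  have h1 : ((η : ℂ) ^ 2 - t ^ 2).re = η ^ 2 - (t.re ^ 2 - t.im ^ 2) := by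
    simp [pow_two, Complex.mul_re, Complex.sub_re]
  have h2 : t.re ^ 2 + t.im ^ 2 = ‖t‖ ^ 2 := by
    rw [← Complex.normSq_eq_norm_sq, Complex.normSq_apply]; ring
  refine le_trans ?_ (h1 ▸ Complex.re_le_norm _)
  have hs0 := norm_nonneg t
  nlinarith [sq_nonneg η, mul_nonneg (sq_nonneg ‖t‖) (sub_nonneg.2 hts)]

lemma abs_gFunKernel_le_of_mem_sphere (ht : t ∈ sphere (-1 : ℂ) 1) (hts : ‖t‖ ≤ 1)
    (ht0 : 0 < ‖t‖) (η : ℝ) : |gFunKernel t η| ≤ 4 * ‖t‖ ^ 2 / (η ^ 2 + ‖t‖ ^ 2) ^ 2 := by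
  refine (abs_gFunKernel_le t η).trans ?_
  calc ‖t‖ ^ 2 / ‖(η : ℂ) ^ 2 - t ^ 2‖ ^ 2 ≤ ‖t‖ ^ 2 / ((η ^ 2 + ‖t‖ ^ 2) / 2) ^ 2 := by
        gcongr
        exact half_sq_add_sq_le_norm_sq_sub_sq ht hts η
    _ = 4 * ‖t‖ ^ 2 / (η ^ 2 + ‖t‖ ^ 2) ^ 2 := by field_simp; ring

lemma abs_mul_gFunKernel_mul_le {σ : ℝ} (hσ : 1 ≤ σ)
    (hμ_mono : ∀ x y : ℝ, 0 < x → x ≤ y → μ x ≤ μ y)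
    (hμ_nm : ∀ lam η : ℝ, 1 < lam → 0 < η → μ (lam * η) ≤ σ * lam * μ η)
    (hμ_nonneg : ∀ x, 0 < x → 0 ≤ μ x) (ht : t ∈ sphere (-1 : ℂ) 1) (hts : ‖t‖ ≤ 1)
    (ht0 : 0 < ‖t‖) {η : ℝ} (hη : 0 < η) :
    |μ η * (gFunKernel t η * η)| ≤ 6 * σ * μ ‖t‖ * ‖t‖ * (η ^ 2 + ‖t‖ ^ 2)⁻¹ := by
  have hK := abs_gFunKernel_le_of_mem_sphere ht hts ht0 η
  have hμη := le_mul_of_normalMajorant hσ hμ_mono hμ_nm hμ_nonneg hη ht0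
  set s := ‖t‖
  have hμs := hμ_nonneg s ht0
  have hσ0 : 0 ≤ σ := zero_le_one.trans hσ
  rw [abs_mul, abs_mul, abs_of_nonneg (hμ_nonneg η hη), abs_of_pos hη]
  calc μ η * (|gFunKernel t η| * η)
      ≤ σ * (1 + η / s) * μ s * (4 * s ^ 2 / (η ^ 2 + s ^ 2) ^ 2 * η) := by gcongr
    _ = σ * μ s * s * (4 * η * (s + η)) / (η ^ 2 + s ^ 2) ^ 2 := by field_simp
    _ ≤ σ * μ s * s * (6 * (η ^ 2 + s ^ 2)) / (η ^ 2 + s ^ 2) ^ 2 := by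
        gcongr σ * μ s * s * ?_ / _
        nlinarith [sq_nonneg (η - s)]
    _ = 6 * σ * μ s * s * (η ^ 2 + s ^ 2)⁻¹ := by field_simp

theorem abs_gFun_le {σ : ℝ} (hσ : 1 ≤ σ)
    (hμ_mono : ∀ x y : ℝ, 0 < x → x ≤ y → μ x ≤ μ y)
    (hμ_nm : ∀ lam η : ℝ, 1 < lam → 0 < η → μ (lam * η) ≤ σ * lam * μ η)
    (hμ_nonneg : ∀ x, 0 < x → 0 ≤ μ x) (ht : t ∈ sphere (-1 : ℂ) 1) (hts : ‖t‖ ≤ 1)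
    (ht0 : t ≠ 0) : |gFun μ t| ≤ 24 * π * σ * μ ‖t‖ := by
  have hs : 0 < ‖t‖ := norm_pos_iff.2 ht0
  set s := ‖t‖
  have hμs := hμ_nonneg s hs
  have hσ0 : 0 ≤ σ := zero_le_one.trans hσ
  have hb : Continuous fun η : ℝ => 6 * σ * μ s * s * (η ^ 2 + s ^ 2)⁻¹ := by
    fun_prop (disch := exact fun η => by positivity)
  have hbound := intervalIntegral.norm_integral_le_of_norm_le
    (f := fun η => μ η * (gFunKernel t η * η)) zero_le_one
    (ae_of_all _ fun η hη => (Real.norm_eq_abs _).trans_le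
      (abs_mul_gFunKernel_mul_le hσ hμ_mono hμ_nm hμ_nonneg ht hts hs hη.1))
    (hb.intervalIntegrable (μ := volume) 0 1)
  have hval : ∫ η in (0 : ℝ)..1, 6 * σ * μ s * s * (η ^ 2 + s ^ 2)⁻¹ ≤ 3 * π * σ * μ s := by
    rw [intervalIntegral.integral_const_mul]
    calc 6 * σ * μ s * s * ∫ η in (0 : ℝ)..1, (η ^ 2 + s ^ 2)⁻¹
        ≤ 6 * σ * μ s * s * (π / (2 * s)) := by gcongr; exact integral_inv_sq_add_sq_le hs
      _ = 3 * π * σ * μ s := by field_simp; ring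
  rw [gFun_eq_integral_gFunKernel, abs_mul, abs_of_pos (by norm_num : (0 : ℝ) < 8)]
  rw [Real.norm_eq_abs] at hbound
  linarith

lemma gFun_zero (μ : ℝ → ℝ) : gFun μ 0 = 0 := by
  simp [gFun]

theorem continuousWithinAt_gFun_zero {σ : ℝ} (hσ : 1 ≤ σ)
    (hμ_mono : ∀ x y : ℝ, 0 < x → x ≤ y → μ x ≤ μ y)
    (hμ_nm : ∀ lam η : ℝ, 1 < lam → 0 < η → μ (lam * η) ≤ σ * lam * μ η)
    (hμ0 : Tendsto μ (𝓝[>] 0) (𝓝 0)) :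
    ContinuousWithinAt (gFun μ) (sphere (-1 : ℂ) 1) 0 := by
  have hμ_nonneg := fun x => nonneg_of_monotoneOn_of_tendsto_zero hμ_mono hμ0 (x := x)
  rw [← continuousWithinAt_sdiff_self, ContinuousWithinAt, gFun_zero]
  have hnorm : Tendsto (fun t : ℂ => ‖t‖) (𝓝[sphere (-1) 1 \ {0}] 0) (𝓝[>] 0) :=
    tendsto_nhdsWithin_of_tendsto_nhds_of_eventually_within _
      (continuous_norm.tendsto' 0 0 norm_zero |>.mono_left nhdsWithin_le_nhds)
      (eventually_nhdsWithin_of_forall fun t ht => norm_pos_iff.2 ht.2)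
  refine squeeze_zero_norm' ?_ (by simpa using (hμ0.comp hnorm).const_mul (24 * π * σ))
  filter_upwards [self_mem_nhdsWithin,
    mem_nhdsWithin_of_mem_nhds (closedBall_mem_nhds (0 : ℂ) one_pos)] with t ht hts
  rw [Real.norm_eq_abs]
  exact abs_gFun_le hσ hμ_mono hμ_nm hμ_nonneg ht.1 (by simpa using hts) ht.2

theorem continuousAt_gFun_of_ne_zero (hμ_mono : ∀ x y : ℝ, 0 < x → x ≤ y → μ x ≤ μ y)
    (hμ_nonneg : ∀ x, 0 < x → 0 ≤ μ x) (ht : t ∈ sphere (-1 : ℂ) 1) (ht0 : t ≠ 0) :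
    ContinuousAt (gFun μ) t := by
  -- the kernel is continuous wherever `t ^ 2` avoids the segment `{η ^ 2 : η ∈ [0, 1]}`
  set S := (fun η : ℝ => (η : ℂ) ^ 2) '' Icc 0 1
  have hS : IsOpen ((fun t : ℂ => t ^ 2) ⁻¹' Sᶜ) :=
    ((isCompact_Icc.image (by fun_prop)).isClosed.isOpen_compl).preimage (continuous_pow 2)
  have htS : t ∈ (fun t : ℂ => t ^ 2) ⁻¹' Sᶜ := by
    rintro ⟨η, hη, h⟩
    exact sq_sub_sq_ne_zero ht ht0 hη (sub_eq_zero.2 h)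
  obtain ⟨r, hr, hrS⟩ := nhds_basis_closedBall.mem_iff.1 (hS.mem_nhds htS)
  have hK : ContinuousOn (Function.uncurry fun t η => gFunKernel t η * η)
      (closedBall t r ×ˢ [[0, 1]]) := by
    refine ContinuousOn.mul (ContinuousOn.div (by fun_prop) (by fun_prop) fun p hp => ?_)
      (by fun_prop)
    refine pow_ne_zero 4 (norm_ne_zero_iff.2 (sub_ne_zero.2 fun h => hrS hp.1 ⟨p.2, ?_, h⟩))
    simpa using hp.2
  have hcont := continuousAt_intervalIntegral_mul_of_continuousOn (isCompact_closedBall t r)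
    (closedBall_mem_nhds t hr) (intervalIntegrable_of_monotoneOn_of_nonneg hμ_mono hμ_nonneg
      zero_le_one) hK
  simp only [funext (gFun_eq_integral_gFunKernel μ)]
  exact continuousAt_const.mul hcont

theorem continuousOn_gFun {σ : ℝ} (hσ : 1 ≤ σ)
    (hμ_mono : ∀ x y : ℝ, 0 < x → x ≤ y → μ x ≤ μ y)
    (hμ_nm : ∀ lam η : ℝ, 1 < lam → 0 < η → μ (lam * η) ≤ σ * lam * μ η)
    (hμ0 : Tendsto μ (𝓝[>] 0) (𝓝 0)) :
    ContinuousOn (gFun μ) (sphere (-1 : ℂ) 1) := by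
  intro t ht
  rcases eq_or_ne t 0 with rfl | ht0
  · exact continuousWithinAt_gFun_zero hσ hμ_mono hμ_nm hμ0
  · exact (continuousAt_gFun_of_ne_zero hμ_mono
      (fun x => nonneg_of_monotoneOn_of_tendsto_zero hμ_mono hμ0) ht ht0).continuousWithinAt

end gFun

/-- For a normal majorant `μ` of class `(σ,1)` with `μ(0⁺) = 0` and density
`g = gFun μ`, the real part of the Cauchy-type integral extends continuously to the closed
disk `{z : |z+1| ≤ 1}`. -/
theorem re_cauchyType_continuous_extension_interior
    (σ : ℝ) (hσ : 1 ≤ σ) (μ : ℝ → ℝ)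
    (hμ_mono : ∀ x y : ℝ, 0 < x → x ≤ y → μ x ≤ μ y)
    (hμ_nm : ∀ lam η : ℝ, 1 < lam → 0 < η → μ (lam * η) ≤ σ * lam * μ η)
    (hμ0 : Filter.Tendsto μ (nhdsWithin 0 (Set.Ioi 0)) (nhds 0)) :
    ∃ F : ℂ → ℝ, ContinuousOn F {z : ℂ | ‖z + 1‖ ≤ 1} ∧
      ∀ z : ℂ, ‖z + 1‖ < 1 → F z = (cauchyTypeIntegral (gFun μ) z).re := by
  have hg : ContinuousOn (gFun μ) (sphere (-1) 1) := continuousOn_gFun hσ hμ_mono hμ_nm hμ0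
  refine ⟨fun z => (circleAverage (gFun μ) (-1) 1 + poissonExtension (gFun μ) (-1) 1 z) / 2,
    ?_, fun z hz => ?_⟩
  · have hdisc : {z : ℂ | ‖z + 1‖ ≤ 1} = closedBall (-1) 1 := by
      ext z; simp [dist_eq_norm]
    rw [hdisc]
    exact (continuousOn_const.add (continuousOn_poissonExtension hg)).div_const 2
  · have hz' : z ∈ ball (-1 : ℂ) 1 := by simpa [dist_eq_norm] using hz
    simp only [re_cauchyTypeIntegral (hg.circleIntegrable zero_le_one) hz', poissonExtension,
      if_pos hz']
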